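/- There exists a finite semifield D with exactly 64 elements such that its center Z(D) has exactly 2 elements, its nucleus N(D) has exactly 2 elements, its left nucleus N_l(D) has exactly 8 elements, its middle nucleus N_m(D) has exactly 4 elements, and its right nucleus N_r(D) has exactly 8 elements. -/

import Mathlib

/-- A finite semifield: a finite nonassociative ring with identity in which
the product of any two nonzero elements is nonzero. -/
structure FiniteSemifield where
  D : Type
  [addGroup : AddCommGroup D]
  mul : D → D → D
  one : D
  finite : Finite D
  mul_add : ∀ a b c : D, mul a (b + c) = mul a b + mul a c
  add_mul : ∀ a b c : D, mul (a + b) c = mul a c + mul b c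
  one_mul : ∀ a : D, mul one a = a
  mul_one : ∀ a : D, mul a one = a
  one_ne_zero : one ≠ (0 : D)
  noZeroDiv : ∀ a b : D, mul a b = 0 → a = 0 ∨ b = 0

attribute [instance] FiniteSemifield.addGroup

/-- The left nucleus of a finite semifield. -/
def FiniteSemifield.leftNucleus (S : FiniteSemifield) : Set S.D :=
  {a : S.D | ∀ b c : S.D, S.mul (S.mul a b) c = S.mul a (S.mul b c)}

/-- The middle nucleus of a finite semifield. -/
def FiniteSemifield.middleNucleus (S : FiniteSemifield) : Set S.D :=
  {b : S.D | ∀ a c : S.D, S.mul (S.mul a b) c = S.mul a (S.mul b c)}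

/-- The right nucleus of a finite semifield. -/
def FiniteSemifield.rightNucleus (S : FiniteSemifield) : Set S.D :=
  {c : S.D | ∀ a b : S.D, S.mul (S.mul a b) c = S.mul a (S.mul b c)}

/-- The nucleus of a finite semifield. -/
def FiniteSemifield.nucleus (S : FiniteSemifield) : Set S.D :=
  S.leftNucleus ∩ S.middleNucleus ∩ S.rightNucleus

/-- The (associative–commutative) center of a finite semifield. -/
def FiniteSemifield.center (S : FiniteSemifield) : Set S.D :=
  {a : S.D | a ∈ S.nucleus ∧ ∀ b : S.D, S.mul a b = S.mul b a}

/-!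
Let `α` be a root of `X³ + X + 1` over `GF(2)` and put
`(x, y) ⋆ (u, v) = (x u + y⁴ v, x² v + y u + α y v)` on `GF(8)²`, with identity `(1, 0)`.
Right multiplication by `(λ, 0)` is scalar multiplication by `λ`, and left multiplication by
`(λ, 0)` is `L : (u, v) ↦ (λ u, λ² v)`, which satisfies `L (b ⋆ c) = L b ⋆ c` because `λ⁸ = λ`;
so `GF(8) × 0` lies in the left and right nuclei. The element `ω = (α², α²)` satisfies
`ω ⋆ ω = ω + 1` and lies in the middle nucleus, hence so does `GF(4) = {0, 1, ω, ω + 1}`; since the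
associator is additive in each argument, this needs checking only on the coordinate axes.
A single associator test with `t = (0, 1)` shows that none of the three nuclei is larger.
The nucleus is then `GF(2)`, which is also the center.
-/

namespace FiniteSemifield

variable (S : FiniteSemifield)

def mulLeft (a : S.D) : S.D →+ S.D := AddMonoidHom.mk' (S.mul a) (S.mul_add a)

def mulRight (c : S.D) : S.D →+ S.D := AddMonoidHom.mk' (S.mul · c) (S.add_mul · · c)

protected lemma zero_mul (a : S.D) : S.mul 0 a = 0 := map_zero (S.mulRight a)

protected lemma mul_zero (a : S.D) : S.mul a 0 = 0 := map_zero (S.mulLeft a)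

lemma zero_mem_middleNucleus : (0 : S.D) ∈ S.middleNucleus := fun a c => by
  rw [S.mul_zero, S.zero_mul, S.mul_zero]

lemma one_mem_middleNucleus : S.one ∈ S.middleNucleus := fun a c => by
  rw [S.mul_one, S.one_mul]

lemma add_mem_middleNucleus {b b' : S.D} (hb : b ∈ S.middleNucleus)
    (hb' : b' ∈ S.middleNucleus) : b + b' ∈ S.middleNucleus := fun a c => by
  rw [S.mul_add, S.add_mul, hb, hb', ← S.mul_add, ← S.add_mul]

lemma mem_middleNucleus_of_closure_eq_top {s : Set S.D} (hs : AddSubgroup.closure s = ⊤)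
    {b : S.D} (h : ∀ a ∈ s, ∀ c ∈ s, S.mul (S.mul a b) c = S.mul a (S.mul b c)) :
    b ∈ S.middleNucleus := by
  have h_left : ∀ a ∈ s, ∀ c, S.mul (S.mul a b) c = S.mul a (S.mul b c) := fun a ha =>
    DFunLike.congr_fun <| AddMonoidHom.eq_of_eqOn_dense hs
      (f := S.mulLeft (S.mul a b)) (g := (S.mulLeft a).comp (S.mulLeft b)) (h a ha)
  intro a c
  exact DFunLike.congr_fun (AddMonoidHom.eq_of_eqOn_dense hs
    (f := (S.mulRight c).comp (S.mulRight b)) (g := S.mulRight (S.mul b c))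
    (fun a ha => h_left a ha c)) a

lemma center_eq_nucleus (h : S.nucleus ⊆ {0, S.one}) : S.center = S.nucleus := by
  refine Set.ext fun a => ⟨And.left, fun ha => ⟨ha, fun b => ?_⟩⟩
  rcases h ha with rfl | rfl
  · rw [S.zero_mul, S.mul_zero]
  · rw [S.one_mul, S.mul_one]

end FiniteSemifield

lemma AddSubgroup.closure_axes_eq_top {A B : Type*} [AddGroup A] [AddGroup B] :
    closure {p : A × B | p.1 = 0 ∨ p.2 = 0} = ⊤ := by
  refine eq_top_iff.2 fun ⟨x, y⟩ _ => ?_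
  rw [show (x, y) = (x, 0) + (0, y) by simp]
  exact add_mem (subset_closure (Or.inr rfl)) (subset_closure (Or.inl rfl))

/-- `GF(2)[α]/(α³ + α + 1)`, the element `c₀ + c₁ α + c₂ α²` being stored as its coefficients. -/
@[ext]
structure GF8 where
  c₀ : ZMod 2
  c₁ : ZMod 2
  c₂ : ZMod 2
deriving DecidableEq, Fintype

namespace GF8

instance : Zero GF8 := ⟨⟨0, 0, 0⟩⟩
instance : One GF8 := ⟨⟨1, 0, 0⟩⟩
instance : Add GF8 := ⟨fun a b => ⟨a.c₀ + b.c₀, a.c₁ + b.c₁, a.c₂ + b.c₂⟩⟩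
instance : Neg GF8 := ⟨fun a => ⟨-a.c₀, -a.c₁, -a.c₂⟩⟩
instance : Mul GF8 := ⟨fun a b =>
  ⟨a.c₀ * b.c₀ + a.c₁ * b.c₂ + a.c₂ * b.c₁,
   a.c₀ * b.c₁ + a.c₁ * b.c₀ + a.c₁ * b.c₂ + a.c₂ * b.c₁ + a.c₂ * b.c₂,
   a.c₀ * b.c₂ + a.c₁ * b.c₁ + a.c₂ * b.c₀ + a.c₂ * b.c₂⟩⟩

lemma zero_def : (0 : GF8) = ⟨0, 0, 0⟩ := rfl
lemma one_def : (1 : GF8) = ⟨1, 0, 0⟩ := rfl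
lemma add_def (a b : GF8) : a + b = ⟨a.c₀ + b.c₀, a.c₁ + b.c₁, a.c₂ + b.c₂⟩ := rfl
lemma mul_def (a b : GF8) : a * b =
    ⟨a.c₀ * b.c₀ + a.c₁ * b.c₂ + a.c₂ * b.c₁,
     a.c₀ * b.c₁ + a.c₁ * b.c₀ + a.c₁ * b.c₂ + a.c₂ * b.c₁ + a.c₂ * b.c₂,
     a.c₀ * b.c₂ + a.c₁ * b.c₁ + a.c₂ * b.c₀ + a.c₂ * b.c₂⟩ := rfl

-- The multiplication is reduction modulo `X³ - X - 1`, which is associative over any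
-- commutative ring, so `ring` proves the axioms coordinatewise.
instance : CommRing GF8 where
  add_assoc _ _ _ := by ext <;> simp only [add_def] <;> ring
  zero_add _ := by ext <;> simp only [add_def, zero_def, zero_add]
  add_zero _ := by ext <;> simp only [add_def, zero_def, add_zero]
  add_comm _ _ := by ext <;> simp only [add_def] <;> ring
  neg_add_cancel _ := by ext <;> exact neg_add_cancel _
  mul_assoc _ _ _ := by ext <;> simp only [mul_def] <;> ring
  one_mul _ := by ext <;> simp only [mul_def, one_def] <;> ring
  mul_one _ := by ext <;> simp only [mul_def, one_def] <;> ring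
  zero_mul _ := by ext <;> simp only [mul_def, zero_def] <;> ring
  mul_zero _ := by ext <;> simp only [mul_def, zero_def] <;> ring
  left_distrib _ _ _ := by ext <;> simp only [mul_def, add_def] <;> ring
  right_distrib _ _ _ := by ext <;> simp only [mul_def, add_def] <;> ring
  mul_comm _ _ := by ext <;> simp only [mul_def] <;> ring
  nsmul := nsmulRec
  zsmul := zsmulRec

instance : Nontrivial GF8 := ⟨⟨0, 1, by decide⟩⟩

instance : CharP GF8 2 := CharTwo.of_one_ne_zero_of_two_eq_zero one_ne_zero (by decide)

def α : GF8 := ⟨0, 1, 0⟩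

lemma card : Nat.card GF8 = 8 := by
  rw [Nat.card_eq_fintype_card]; rfl

lemma pow_eight (a : GF8) : a ^ 8 = a := by
  revert a; decide

lemma add_pow_four (a b : GF8) : (a + b) ^ 4 = a ^ 4 + b ^ 4 :=
  add_pow_char_pow (p := 2) (n := 2) a b

end GF8

namespace Semifield64

open GF8

-- Only the addition of the `Prod` ring `GF8 × GF8` is used: the identity of `mul` is `(1, 0)`,
-- not the `Prod` one `(1, 1)`.
def mul (a b : GF8 × GF8) : GF8 × GF8 :=
  (a.1 * b.1 + a.2 ^ 4 * b.2, a.1 ^ 2 * b.2 + a.2 * b.1 + α * a.2 * b.2)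

lemma mul_add (a b c : GF8 × GF8) : mul a (b + c) = mul a b + mul a c := by
  ext : 1 <;> simp only [mul, Prod.fst_add, Prod.snd_add] <;> ring

lemma add_mul (a b c : GF8 × GF8) : mul (a + b) c = mul a c + mul b c := by
  ext : 1 <;> simp only [mul, Prod.fst_add, Prod.snd_add, add_pow_four, add_pow_char] <;> ring

lemma one_mul (a : GF8 × GF8) : mul (1, 0) a = a := by
  ext : 1 <;> simp only [mul] <;> ring

lemma mul_one (a : GF8 × GF8) : mul a (1, 0) = a := by
  ext : 1 <;> simp only [mul] <;> ring

lemma one_ne_zero : ((1, 0) : GF8 × GF8) ≠ 0 := fun h =>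
  _root_.one_ne_zero (Prod.mk_eq_zero.1 h).1

lemma eq_zero_or_eq_zero_of_mul_eq_zero :
    ∀ a b : GF8 × GF8, mul a b = 0 → a = 0 ∨ b = 0 := by
  decide +kernel

def ω : GF8 × GF8 := (α ^ 2, α ^ 2)

abbrev gf8 : Set (GF8 × GF8) := {x | x.2 = 0}

abbrev gf4 : Set (GF8 × GF8) := {0, (1, 0), ω, ω + (1, 0)}

abbrev gf2 : Set (GF8 × GF8) := {0, (1, 0)}

lemma mul_assoc_mk_zero_left (l : GF8) (b c : GF8 × GF8) :
    mul (mul (l, 0) b) c = mul (l, 0) (mul b c) := by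
  ext : 1 <;> simp only [mul]
  · linear_combination b.2 ^ 4 * c.2 * pow_eight l
  · ring

lemma mul_assoc_mk_zero_right (l : GF8) (a b : GF8 × GF8) :
    mul (mul a b) (l, 0) = mul a (mul b (l, 0)) := by
  ext : 1 <;> simp only [mul] <;> ring

lemma mul_assoc_ω_of_mem_axes : ∀ a c : GF8 × GF8, (a.1 = 0 ∨ a.2 = 0) →
    (c.1 = 0 ∨ c.2 = 0) → mul (mul a ω) c = mul a (mul ω c) := by
  decide +kernel

lemma mem_gf8_of_mul_assoc_left : ∀ x : GF8 × GF8,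
    mul (mul x (0, 1)) (0, 1) = mul x (mul (0, 1) (0, 1)) → x ∈ gf8 := by
  decide +kernel

lemma mem_gf8_of_mul_assoc_right : ∀ x : GF8 × GF8,
    mul (mul (0, 1) (0, 1)) x = mul (0, 1) (mul (0, 1) x) → x ∈ gf8 := by
  decide +kernel

lemma mem_gf4_of_mul_assoc_middle : ∀ x : GF8 × GF8,
    mul (mul (0, 1) x) (0, 1) = mul (0, 1) (mul x (0, 1)) → x ∈ gf4 := by
  decide +kernel

lemma gf8_inter_gf4_inter_gf8 : gf8 ∩ gf4 ∩ gf8 = gf2 := by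
  ext x
  revert x
  decide +kernel

lemma nat_card_gf8 : Nat.card gf8 = 8 := by
  rw [Nat.card_eq_fintype_card]; rfl

lemma nat_card_gf4 : Nat.card gf4 = 4 := by
  rw [Nat.card_eq_fintype_card]; rfl

lemma nat_card_gf2 : Nat.card gf2 = 2 := by
  rw [Nat.card_eq_fintype_card]; rfl

end Semifield64

def semifield64 : FiniteSemifield where
  D := GF8 × GF8
  mul := Semifield64.mul
  one := (1, 0)
  finite := inferInstance
  mul_add := Semifield64.mul_add
  add_mul := Semifield64.add_mul
  one_mul := Semifield64.one_mul
  mul_one := Semifield64.mul_one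
  one_ne_zero := Semifield64.one_ne_zero
  noZeroDiv := Semifield64.eq_zero_or_eq_zero_of_mul_eq_zero

open Semifield64

lemma semifield64_leftNucleus : semifield64.leftNucleus = gf8 := by
  refine Set.ext fun x => ⟨fun hx => mem_gf8_of_mul_assoc_left x (hx _ _), fun hx => ?_⟩
  obtain ⟨l, y⟩ := x
  obtain rfl : y = 0 := hx
  exact mul_assoc_mk_zero_left l

lemma semifield64_rightNucleus : semifield64.rightNucleus = gf8 := by
  refine Set.ext fun x => ⟨fun hx => mem_gf8_of_mul_assoc_right x (hx _ _), fun hx => ?_⟩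
  obtain ⟨l, y⟩ := x
  obtain rfl : y = 0 := hx
  exact mul_assoc_mk_zero_right l

lemma semifield64_middleNucleus : semifield64.middleNucleus = gf4 := by
  have hω : ω ∈ semifield64.middleNucleus :=
    semifield64.mem_middleNucleus_of_closure_eq_top AddSubgroup.closure_axes_eq_top
      fun a ha c hc => mul_assoc_ω_of_mem_axes a c ha hc
  refine Set.ext fun x => ⟨fun hx => mem_gf4_of_mul_assoc_middle x (hx _ _), ?_⟩
  rintro (rfl | rfl | rfl | rfl)
  · exact semifield64.zero_mem_middleNucleus
  · exact semifield64.one_mem_middleNucleus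
  · exact hω
  · exact semifield64.add_mem_middleNucleus hω semifield64.one_mem_middleNucleus

lemma semifield64_nucleus : semifield64.nucleus = gf2 := by
  rw [FiniteSemifield.nucleus, semifield64_leftNucleus, semifield64_middleNucleus,
    semifield64_rightNucleus]
  exact gf8_inter_gf4_inter_gf8

/-- There exists a finite semifield of order 64 with center of order 2, nucleus of
order 2, left nucleus of order 8, middle nucleus of order 4 and right nucleus of
order 8. -/
theorem exists_semifield64_with_nuclei_2_2_8_4_8 :
    ∃ S : FiniteSemifield, Nat.card S.D = 64 ∧
      Nat.card S.center = 2 ∧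
      Nat.card S.nucleus = 2 ∧
      Nat.card S.leftNucleus = 8 ∧
      Nat.card S.middleNucleus = 4 ∧
      Nat.card S.rightNucleus = 8 := by
  have h_center : semifield64.center = gf2 := by
    rw [semifield64.center_eq_nucleus semifield64_nucleus.subset, semifield64_nucleus]
  refine ⟨semifield64, ?_, ?_, ?_, ?_, ?_, ?_⟩
  · exact (Nat.card_prod _ _).trans (by rw [GF8.card])
  · rw [h_center]; exact nat_card_gf2
  · rw [semifield64_nucleus]; exact nat_card_gf2
  · rw [semifield64_leftNucleus]; exact nat_card_gf8
  · rw [semifield64_middleNucleus]; exact nat_card_gf4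
  · rw [semifield64_rightNucleus]; exact nat_card_gf8
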